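/- Let n ≥ 1 be such that n(n−1)/2 is even, and let A_n denote the alternating group of even permutations of Fin n. For λ : Fin n → ℝ, define λ† : Fin n → ℝ by λ† i = −λ(n − 1 − i) (negation composed with reversal of the coordinates). Then for all λ, x : Fin n → ℝ, conj(Ê_λ(x)) = Ê_{λ†}(x). In particular, if λ† = λ then Ê_λ is real-valued. -/

import Mathlib

/-!
Complex conjugation turns `Ê_λ` into `Ê_{-λ}`, and `Ê` is invariant under even permutations of
`λ`. The reversal `w₀` has all `n(n-1)/2` pairs as inversions, so it is even under the parity
hypothesis and `Ê_{-λ} = Ê_{-λ ∘ w₀} = Ê_{λ†}`.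
-/

/-- The normalized `E`-orbit function
`Ê_λ(x) = ∑_{σ ∈ Aₙ} exp(2πi ∑ᵢ λ(σ⁻¹ i) · x i)`. -/
noncomputable def Ehat (n : ℕ) (lam x : Fin n → ℝ) : ℂ :=
  ∑ σ : alternatingGroup (Fin n),
    Complex.exp (2 * (Real.pi : ℂ) * Complex.I *
      ((∑ i, lam ((σ : Equiv.Perm (Fin n))⁻¹ i) * x i : ℝ) : ℂ))

open Equiv Finset

theorem Fin.sign_revPerm (n : ℕ) :
    Perm.sign (Fin.revPerm : Perm (Fin n)) = (-1) ^ (n * (n - 1) / 2) := by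
  calc Perm.sign (Fin.revPerm : Perm (Fin n))
      = ∏ j : Fin n, ∏ _i ∈ Iio j, (-1 : ℤˣ) := by
        rw [Perm.sign_eq_prod_prod_Iio]
        refine prod_congr rfl fun j _ => prod_congr rfl fun i hi => ?_
        simp [Fin.rev_lt_rev, (mem_Iio.mp hi).not_gt]
    _ = (-1) ^ ∑ j : Fin n, (j : ℕ) := by simp [prod_pow_eq_pow_sum]
    _ = (-1) ^ (n * (n - 1) / 2) := by
        rw [Fin.sum_univ_eq_sum_range (fun i => i) n, sum_range_id]

theorem Fin.revPerm_mem_alternatingGroup {n : ℕ} (hn : Even (n * (n - 1) / 2)) :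
    (Fin.revPerm : Perm (Fin n)) ∈ alternatingGroup (Fin n) := by
  rw [Perm.mem_alternatingGroup, Fin.sign_revPerm, hn.neg_one_pow]

theorem Ehat_comp_of_mem_alternatingGroup {n : ℕ} {τ : Perm (Fin n)}
    (hτ : τ ∈ alternatingGroup (Fin n)) (lam x : Fin n → ℝ) :
    Ehat n (lam ∘ τ) x = Ehat n lam x := by
  refine Fintype.sum_equiv (Equiv.mulRight ⟨τ, hτ⟩⁻¹) _ _ fun σ => ?_
  simp [mul_inv_rev]

theorem conj_Ehat (n : ℕ) (lam x : Fin n → ℝ) :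
    (starRingEnd ℂ) (Ehat n lam x) = Ehat n (-lam) x := by
  simp only [Ehat, map_sum, ← Complex.exp_conj, map_mul, Complex.conj_I, Complex.conj_ofReal,
    map_ofNat, Pi.neg_apply, neg_mul, sum_neg_distrib, Complex.ofReal_neg]
  congr! 2
  ring

theorem Ehat_conj_of_even (n : ℕ) (hpar : Even (n * (n - 1) / 2))
    (lam x : Fin n → ℝ) :
    (starRingEnd ℂ) (Ehat n lam x) = Ehat n (fun i => -lam i.rev) x ∧
      ((fun i : Fin n => -lam i.rev) = lam → ∃ r : ℝ, Ehat n lam x = (r : ℂ)) := by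
  have hconj : (starRingEnd ℂ) (Ehat n lam x) = Ehat n (fun i => -lam i.rev) x := by
    rw [conj_Ehat, ← Ehat_comp_of_mem_alternatingGroup (Fin.revPerm_mem_alternatingGroup hpar)]
    rfl
  refine ⟨hconj, fun hfix => ⟨(Ehat n lam x).re, ?_⟩⟩
  rw [hfix] at hconj
  exact (Complex.conj_eq_iff_re.mp hconj).symm
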